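/- arXiv:2012.09451 — 3 statements merged into one kernel-verified Lean document; each statement's English description precedes it below -/
import Mathlib

section
/- Let P be a k-edge partition with no adjustable edges. Define p_v as the number of parts whose vertex set contains v, let t = (k+1)/2, and let V_> = {v ∈ V : p_v > t}. Then V_> is an independent set in G; i.e., no two vertices of V_> are joined by an edge of G. -/
open Finset
open scoped Classical

/-- The set of vertices appearing in (incident to some edge of) an edge set `F`. -/
noncomputable def verts {V : Type*} [Fintype V] (F : Finset (Sym2 V)) : Finset V :=
  Finset.univ.filter (fun v => ∃ e ∈ F, v ∈ e)

/-- An edge `e` of part `i` is adjustable if some other part `j` contains both its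
endpoints among its vertices. -/
def IsAdjustable {V : Type*} [Fintype V] {k : ℕ}
    (parts : Fin k → Finset (Sym2 V)) (e : Sym2 V) (i : Fin k) : Prop :=
  ∃ j : Fin k, j ≠ i ∧ ∀ v ∈ e, v ∈ verts (parts j)

/-- The number of parts whose vertex set contains `v`. -/
noncomputable def numParts {V : Type*} [Fintype V] {k : ℕ}
    (parts : Fin k → Finset (Sym2 V)) (v : V) : ℕ :=
  (Finset.univ.filter (fun i : Fin k => v ∈ verts (parts i))).card

/-- If a k-edge partition has no adjustable edges, then with t = (k+1)/2 the set
V_> = {v : p_v > t} is an independent set in G: no two vertices of V_> are joined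
by an edge of G.  (p_v > t is expressed integrally as 2 p_v > k + 1.) -/
theorem no_adjustable_imp_Vgt_independent
    {V : Type*} [Fintype V] {k : ℕ}
    (Eset : Finset (Sym2 V)) (parts : Fin k → Finset (Sym2 V))
    (hdisj : ∀ i j : Fin k, i ≠ j → Disjoint (parts i) (parts j))
    (hunion : Finset.univ.biUnion parts = Eset)
    (hnoadj : ∀ i : Fin k, ∀ e ∈ parts i, ¬ IsAdjustable parts e i) :
    ∀ u v : V, u ≠ v → s(u, v) ∈ Eset →
      ¬ (k + 1 < 2 * numParts parts u ∧ k + 1 < 2 * numParts parts v) := by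
  intro u v huv he ⟨hu, hv⟩
  rw [← hunion, Finset.mem_biUnion] at he
  obtain ⟨i, -, hi⟩ := he
  set A := Finset.univ.filter (fun j : Fin k => u ∈ verts (parts j)) with hA
  set B := Finset.univ.filter (fun j : Fin k => v ∈ verts (parts j)) with hB
  have hAcard : numParts parts u = A.card := rfl
  have hBcard : numParts parts v = B.card := rfl
  have hcard : 2 ≤ (A ∩ B).card := by
    have h1 : A.card + B.card = (A ∪ B).card + (A ∩ B).card :=
      (Finset.card_union_add_card_inter A B).symm
    have h2 : (A ∪ B).card ≤ k := by
      simpa using Finset.card_le_card (Finset.subset_univ (A ∪ B))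
    omega
  have hiAB : i ∈ A ∩ B := by
    simp only [Finset.mem_inter, hA, hB, Finset.mem_filter, Finset.mem_univ, true_and,
      verts, verts]
    exact ⟨⟨s(u, v), hi, by simp⟩, ⟨s(u, v), hi, by simp⟩⟩
  obtain ⟨j, hjAB, hji⟩ := Finset.exists_mem_ne (lt_of_lt_of_le one_lt_two hcard) i
  simp only [Finset.mem_inter, hA, hB, Finset.mem_filter, Finset.mem_univ, true_and] at hjAB
  exact hnoadj i _ hi ⟨j, hji, by
    intro w hw
    rw [Sym2.mem_iff] at hw
    rcases hw with rfl | rfl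
    · exact hjAB.1
    · exact hjAB.2⟩
end

section
/- Let P be a k-edge partition of G with no adjustable edges, t = (k+1)/2, V_t = {v ∈ V : deg(v) > t}, and I_t a maximum independent set in the induced subgraph G[V_t]. Then RF(P) ≤ min{2|E|/|V|, t·(|I_t|/|V| + 1)}; in particular P is an approximation with ratio at most min{d̃, t(|I_t|/|V| + 1)} for the edge partition problem. -/
open Finset
open scoped Classical

/-- The degree of a vertex: the number of edges of the graph incident to it. -/
noncomputable def deg {V : Type*} [Fintype V] (Eset : Finset (Sym2 V)) (v : V) : ℕ :=
  (Eset.filter (fun e => v ∈ e)).card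

noncomputable def pv {V : Type*} [Fintype V] {k : ℕ}
    (parts : Fin k → Finset (Sym2 V)) (v : V) : ℕ :=
  (Finset.univ.filter (fun i => v ∈ verts (parts i))).card

lemma sum_verts_eq_sum_pv {V : Type*} [Fintype V] {k : ℕ}
    (parts : Fin k → Finset (Sym2 V)) :
    ∑ i, (verts (parts i)).card = ∑ v, pv parts v := by
  simp only [pv, verts, Finset.card_filter, Finset.mem_filter, Finset.mem_univ, true_and]
  exact Finset.sum_comm

lemma pv_le_deg {V : Type*} [Fintype V] {k : ℕ}
    (Eset : Finset (Sym2 V)) (parts : Fin k → Finset (Sym2 V))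
    (hdisj : ∀ i j : Fin k, i ≠ j → Disjoint (parts i) (parts j))
    (hunion : Finset.univ.biUnion parts = Eset) (v : V) :
    pv parts v ≤ deg Eset v := by
  have hdeg : deg Eset v = ∑ i, ((parts i).filter (fun e => v ∈ e)).card := by
    rw [deg, ← hunion, Finset.filter_biUnion]
    rw [Finset.card_biUnion]
    intro i _ j _ hij
    exact Finset.disjoint_filter_filter (hdisj i j hij)
  rw [hdeg, pv]
  calc (Finset.univ.filter (fun i => v ∈ verts (parts i))).card
      = ∑ i ∈ Finset.univ.filter (fun i => v ∈ verts (parts i)), 1 := by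
        simp
    _ ≤ ∑ i ∈ Finset.univ.filter (fun i => v ∈ verts (parts i)),
          ((parts i).filter (fun e => v ∈ e)).card := by
        apply Finset.sum_le_sum
        intro i hi
        simp only [Finset.mem_filter, verts, Finset.mem_univ, true_and] at hi
        obtain ⟨e, he, hve⟩ := hi
        rw [Nat.one_le_iff_ne_zero, ← Nat.pos_iff_ne_zero, Finset.card_pos]
        exact ⟨e, Finset.mem_filter.2 ⟨he, hve⟩⟩
    _ ≤ ∑ i, ((parts i).filter (fun e => v ∈ e)).card :=
        Finset.sum_le_sum_of_subset (Finset.filter_subset _ _)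

lemma card_mem_filter_eq_two {V : Type*} [Fintype V] (e : Sym2 V) (h : ¬ e.IsDiag) :
    (Finset.univ.filter (fun v => v ∈ e)).card = 2 := by
  induction e using Sym2.inductionOn with
  | hf a b =>
    rw [Sym2.isDiag_iff_proj_eq] at h
    have : Finset.univ.filter (fun v => v ∈ s(a, b)) = {a, b} := by
      ext x; simp [Sym2.mem_iff]
    rw [this, Finset.card_insert_of_notMem (by simpa using h), Finset.card_singleton]

lemma sum_deg_eq {V : Type*} [Fintype V] (Eset : Finset (Sym2 V))
    (hsimple : ∀ e ∈ Eset, ¬ e.IsDiag) :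
    ∑ v, deg Eset v = 2 * Eset.card := by
  have : ∑ v, deg Eset v = ∑ e ∈ Eset, (Finset.univ.filter (fun v => v ∈ e)).card := by
    simp only [deg, Finset.card_filter]
    rw [Finset.sum_comm]
  rw [this, Finset.sum_congr rfl (fun e he => card_mem_filter_eq_two e (hsimple e he))]
  simp [mul_comm]

/-- Let P be a k-edge partition with no adjustable edges, t = (k+1)/2,
V_t = {v : deg v > t}, and I_t a maximum independent set of the induced subgraph
G[V_t].  Then RF(P) ≤ min{2|E|/|V|, t·(|I_t|/|V| + 1)}; since the optimal
replication factor is at least 1 (no isolated vertices), P is an approximation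
with ratio at most min{d̃, t(|I_t|/|V| + 1)}. -/
theorem RF_le_min_avgdeg_t_of_no_adjustable
    {V : Type*} [Fintype V] [Nonempty V] {k : ℕ}
    (Eset : Finset (Sym2 V)) (parts : Fin k → Finset (Sym2 V))
    (hdisj : ∀ i j : Fin k, i ≠ j → Disjoint (parts i) (parts j))
    (hunion : Finset.univ.biUnion parts = Eset)
    (hcov : ∀ v : V, ∃ e ∈ Eset, v ∈ e)
    (hsimple : ∀ e ∈ Eset, ¬ e.IsDiag)
    (hnoadj : ∀ i : Fin k, ∀ e ∈ parts i, ¬ IsAdjustable parts e i)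
    (Vt : Finset V)
    (hVt : Vt = Finset.univ.filter (fun v => k + 1 < 2 * deg Eset v))
    (It : Finset V) (hItsub : It ⊆ Vt)
    (hItindep : ∀ u ∈ It, ∀ v ∈ It, u ≠ v → s(u, v) ∉ Eset)
    (hItmax : ∀ S : Finset V, S ⊆ Vt →
      (∀ u ∈ S, ∀ v ∈ S, u ≠ v → s(u, v) ∉ Eset) → S.card ≤ It.card) :
    (∑ i, ((verts (parts i)).card : ℝ)) / (Fintype.card V : ℝ) ≤
      min (2 * (Eset.card : ℝ) / (Fintype.card V : ℝ))
        (((k : ℝ) + 1) / 2 * ((It.card : ℝ) / (Fintype.card V : ℝ) + 1)) := by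
  have hn : (0 : ℝ) < (Fintype.card V : ℝ) := by
    exact_mod_cast Fintype.card_pos
  -- key nat facts
  have hpd : ∀ v, pv parts v ≤ deg Eset v := pv_le_deg Eset parts hdisj hunion
  have h1 : ∑ v, pv parts v ≤ 2 * Eset.card := by
    calc ∑ v, pv parts v ≤ ∑ v, deg Eset v := Finset.sum_le_sum (fun v _ => hpd v)
      _ = 2 * Eset.card := sum_deg_eq Eset hsimple
  -- the set of heavy vertices
  set S : Finset V := Finset.univ.filter (fun v => k + 1 < 2 * pv parts v) with hS
  have hSsub : S ⊆ Vt := by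
    intro v hv
    rw [hS, Finset.mem_filter] at hv
    rw [hVt, Finset.mem_filter]
    exact ⟨Finset.mem_univ v, lt_of_lt_of_le hv.2 (by
      have := hpd v; omega)⟩
  have hSindep : ∀ u ∈ S, ∀ v ∈ S, u ≠ v → s(u, v) ∉ Eset := by
    intro u hu v hv huv he
    rw [← hunion, Finset.mem_biUnion] at he
    obtain ⟨i, -, hei⟩ := he
    rw [hS, Finset.mem_filter] at hu hv
    -- parts containing both u and v
    set C : Finset (Fin k) :=
      Finset.univ.filter (fun i => u ∈ verts (parts i) ∧ v ∈ verts (parts i)) with hC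
    have hcard : pv parts u + pv parts v ≤ k + C.card := by
      have h := Finset.card_union_add_card_inter
        (Finset.univ.filter (fun i => u ∈ verts (parts i)))
        (Finset.univ.filter (fun i => v ∈ verts (parts i)))
      have h2 : (Finset.univ.filter (fun i => u ∈ verts (parts i)) ∪
          Finset.univ.filter (fun i => v ∈ verts (parts i))).card ≤ k :=
        le_trans (Finset.card_le_card (Finset.subset_univ _)) (le_of_eq (by simp))
      rw [← Finset.filter_and] at h
      rw [pv, pv, hC]
      omega
    have hC2 : 1 < C.card := by omega
    obtain ⟨a, ha, b, hb, hab⟩ := Finset.one_lt_card.1 hC2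
    have hj : ∃ j ∈ C, j ≠ i := by
      by_cases h : a = i
      · exact ⟨b, hb, by rintro rfl; exact hab h⟩
      · exact ⟨a, ha, h⟩
    obtain ⟨j, hjC, hji⟩ := hj
    rw [hC, Finset.mem_filter] at hjC
    apply hnoadj i _ hei
    exact ⟨j, hji, fun w hw => by
      rw [Sym2.mem_iff] at hw
      rcases hw with rfl | rfl
      · exact hjC.2.1
      · exact hjC.2.2⟩
  have hSIt : S.card ≤ It.card := hItmax S hSsub hSindep
  -- second bound
  have h2 : 2 * ∑ v, pv parts v ≤ (k + 1) * (It.card + Fintype.card V) := by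
    have hsplit : ∑ v, pv parts v = ∑ v ∈ S, pv parts v + ∑ v ∈ Sᶜ, pv parts v :=
      (Finset.sum_add_sum_compl S _).symm
    have hpk : ∀ v : V, pv parts v ≤ k := fun v => by
      rw [pv]; exact (Finset.card_filter_le _ _).trans (le_of_eq (by simp))
    have hA : ∑ v ∈ S, pv parts v ≤ k * S.card := by
      calc ∑ v ∈ S, pv parts v ≤ ∑ _v ∈ S, k := Finset.sum_le_sum (fun v _ => hpk v)
        _ = k * S.card := by rw [Finset.sum_const, smul_eq_mul, mul_comm]
    have hB : 2 * ∑ v ∈ Sᶜ, pv parts v ≤ (k + 1) * Sᶜ.card := by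
      calc 2 * ∑ v ∈ Sᶜ, pv parts v = ∑ v ∈ Sᶜ, 2 * pv parts v := by
            rw [Finset.mul_sum]
        _ ≤ ∑ _v ∈ Sᶜ, (k + 1) := Finset.sum_le_sum (fun v hv => by
            rw [Finset.mem_compl, hS, Finset.mem_filter] at hv
            push_neg at hv
            exact hv (Finset.mem_univ v))
        _ = (k + 1) * Sᶜ.card := by rw [Finset.sum_const, smul_eq_mul, mul_comm]
    have hn' : S.card + Sᶜ.card = Fintype.card V := Finset.card_add_card_compl S
    have a1 : k * S.card ≤ (k + 1) * It.card := Nat.mul_le_mul (Nat.le_succ k) hSIt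
    have a2 : k * S.card ≤ (k + 1) * S.card :=
      Nat.mul_le_mul_right _ (Nat.le_succ k)
    calc 2 * ∑ v, pv parts v
        = 2 * ∑ v ∈ S, pv parts v + 2 * ∑ v ∈ Sᶜ, pv parts v := by rw [hsplit]; ring
      _ ≤ 2 * (k * S.card) + (k + 1) * Sᶜ.card :=
          add_le_add (Nat.mul_le_mul_left 2 hA) hB
      _ ≤ ((k + 1) * It.card + (k + 1) * S.card) + (k + 1) * Sᶜ.card := by omega
      _ = (k + 1) * (It.card + (S.card + Sᶜ.card)) := by ring
      _ = (k + 1) * (It.card + Fintype.card V) := by rw [hn']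
  -- pass to reals
  have hsum : (∑ i, ((verts (parts i)).card : ℝ)) = (∑ v, pv parts v : ℕ) := by
    rw [← sum_verts_eq_sum_pv]
    push_cast
    rfl
  refine le_min ?_ ?_
  · rw [hsum, div_le_div_iff₀ hn hn]
    have : ((∑ v, pv parts v : ℕ) : ℝ) ≤ 2 * (Eset.card : ℝ) := by exact_mod_cast h1
    nlinarith
  · rw [hsum, div_le_iff₀ hn]
    have h2' : 2 * ((∑ v, pv parts v : ℕ) : ℝ) ≤
        ((k : ℝ) + 1) * ((It.card : ℝ) + (Fintype.card V : ℝ)) := by exact_mod_cast h2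
    have hid : (It.card : ℝ) / (Fintype.card V : ℝ) * (Fintype.card V : ℝ) = (It.card : ℝ) :=
      div_mul_cancel₀ _ (ne_of_gt hn)
    nlinarith
end

section
/- Moving an adjustable edge (u,v) ∈ E_i to a reachable part strictly decreases the replication factor if u or v has degree 1 in the subgraph G[E_i]: if u is incident to exactly one edge of E_i (namely (u,v)) and (u,v) is adjustable with reachable part E_j, then RF(P') < RF(P) where P' is the partition after moving (u,v) from E_i to E_j. -/
open Finset
open scoped Classical

/-- Moving an adjustable edge (u,v) ∈ E_i to a reachable part E_j strictly decreases
the replication factor if u has degree 1 in the subgraph G[E_i], i.e. (u,v) is the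
only edge of E_i incident to u. -/
theorem RF_strict_decrease_move_adjustable_deg_one
    {V : Type*} [Fintype V] [Nonempty V] {k : ℕ}
    (parts : Fin k → Finset (Sym2 V)) (i j : Fin k) (hij : j ≠ i)
    (u v : V) (he : s(u, v) ∈ parts i)
    (hdeg1 : (parts i).filter (fun f => u ∈ f) = {s(u, v)})
    (hu : u ∈ verts (parts j)) (hv : v ∈ verts (parts j))
    (parts' : Fin k → Finset (Sym2 V))
    (hparts' : parts' = Function.update
      (Function.update parts i (parts i \ {s(u, v)})) j (parts j ∪ {s(u, v)})) :
    (∑ l, ((verts (parts' l)).card : ℝ)) / (Fintype.card V : ℝ) <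
      (∑ l, ((verts (parts l)).card : ℝ)) / (Fintype.card V : ℝ) := by
  have hVpos : (0:ℝ) < (Fintype.card V : ℝ) := by
    exact_mod_cast Fintype.card_pos
  apply div_lt_div_of_pos_right ?_ hVpos
  -- facts about the updated parts
  have hpj : parts' j = parts j ∪ {s(u, v)} := by
    simp [hparts']
  have hpi : parts' i = parts i \ {s(u, v)} := by
    rw [hparts', Function.update_of_ne hij.symm, Function.update_self]
  have hpl : ∀ l, l ≠ i → l ≠ j → parts' l = parts l := by
    intro l hli hlj
    simp [hparts', Function.update_of_ne hlj, Function.update_of_ne hli]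
  -- verts of j unchanged
  have hvj : verts (parts' j) = verts (parts j) := by
    rw [hpj]
    ext w
    simp only [verts, mem_filter, mem_union, mem_singleton, mem_univ, true_and]
    constructor
    · rintro ⟨e, he', hw⟩
      rcases he' with he' | rfl
      · exact ⟨e, he', hw⟩
      · rcases Sym2.mem_iff.mp hw with rfl | rfl
        · simpa [verts] using hu
        · simpa [verts] using hv
    · rintro ⟨e, he', hw⟩
      exact ⟨e, Or.inl he', hw⟩
  -- verts of i strictly decreases
  have hss : verts (parts' i) ⊂ verts (parts i) := by
    rw [hpi]
    constructor
    · intro w hw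
      simp only [verts, mem_filter, mem_univ, true_and, mem_sdiff] at hw ⊢
      obtain ⟨e, ⟨he1, _⟩, hw⟩ := hw
      exact ⟨e, he1, hw⟩
    · intro hsub
      have hu' : u ∈ verts (parts i) := by
        simp only [verts, mem_filter, mem_univ, true_and]
        exact ⟨s(u,v), he, Sym2.mem_mk_left u v⟩
      have := hsub hu'
      simp only [verts, mem_filter, mem_univ, true_and, mem_sdiff, mem_singleton] at this
      obtain ⟨e, ⟨he1, hne⟩, hue⟩ := this
      have : e ∈ (parts i).filter (fun f => u ∈ f) := mem_filter.mpr ⟨he1, hue⟩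
      rw [hdeg1, mem_singleton] at this
      exact hne this
  have hcard : (verts (parts' i)).card < (verts (parts i)).card :=
    Finset.card_lt_card hss
  refine Finset.sum_lt_sum ?_ ⟨i, mem_univ i, by exact_mod_cast hcard⟩
  · intro l _
    by_cases hli : l = i
    · subst hli; exact_mod_cast hcard.le
    · by_cases hlj : l = j
      · subst hlj; rw [hvj]
      · rw [hpl l hli hlj]
end
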